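/- For every n ∈ ℕ: the function D_n is nonincreasing on ℝ (x ≤ y implies D_n(y) ≤ D_n(x)); D_n(x) = 1 for all x ≤ 0; D_n(x) = 0 for all x > n; and D_n is continuous at every point x ∈ ℝ with x ≠ n. -/

import Mathlib

/-!
By induction on `n`, with continuity strengthened to continuity on `(-∞, n]` (to the right of `n`
the function vanishes). On each `[k, k + 1]` with `k ≤ n`, `D (n + 1)` is an interpolation
`(1 - w) * c + w * f` between a value `c` of `D n` at an integer and a shifted copy `f` of `D n`
(or, for `k = 0` and `n` odd, the constant `D n 1`). When `k + n` is even the weight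
`w = t / (1 + t)`, `t = x - k`, increases and `f ≤ c`; when it is odd `w = (1 - t) / (2 - t)`
decreases and `c ≤ f`. In both cases the interpolation is antitone, since `D n` is. At the integer
endpoints the interval formulas agree with the definition because `D (n + 1) m = D n m` whenever
`m + n` is even, which is an induction on the rule `D (n + 1) m = (D n (m - 1) + D n (m + 1)) / 2`.
-/

open Classical in
/-- The recursively defined functions `D n : ℝ → ℝ`. -/
noncomputable def D : ℕ → ℝ → ℝ
  | 0, x => if x ≤ 0 then 1 else 0
  | n + 1, x =>
    if x ≤ 0 then 1
    else if ((n : ℝ) + 1) < x then 0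
    else if ∃ m : ℤ, x = (m : ℝ) then
      (1 / 2) * D n (x - 1) + (1 / 2) * D n (x + 1)
    else if Odd n ∧ x < 1 then
      (1 - x) * D n 0 + x * D n 1
    else if Even (⌊x⌋ + (n : ℤ)) then
      (1 / (1 + Int.fract x)) * D n (⌊x⌋ : ℝ)
        + (Int.fract x / (1 + Int.fract x)) * D n (x + 1)
    else
      ((1 - Int.fract x) / (2 - Int.fract x)) * D n (x - 1)
        + (1 / (2 - Int.fract x)) * D n (⌈x⌉ : ℝ)

open Set

lemma D_of_nonpos (n : ℕ) {x : ℝ} (hx : x ≤ 0) : D n x = 1 := by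
  cases n <;> simp [D, hx]

lemma D_of_lt (n : ℕ) {x : ℝ} (hx : (n : ℝ) < x) : D n x = 0 := by
  cases n with
  | zero =>
    rw [Nat.cast_zero] at hx
    simp [D, hx]
  | succ n =>
    push_cast at hx
    simp [D, hx, (by positivity : (0 : ℝ) ≤ n).trans_lt ((lt_add_one _).trans hx)]

lemma D_succ_intCast {n : ℕ} {m : ℤ} (hm₀ : 0 < m) (hm : m ≤ n + 1) :
    D (n + 1) m = 1 / 2 * D n (m - 1) + 1 / 2 * D n (m + 1) := by
  have hm₀' : ¬ (m : ℝ) ≤ 0 := by exact_mod_cast hm₀.not_ge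
  have hm' : ¬ (n : ℝ) + 1 < m := by exact_mod_cast hm.not_gt
  rw [D, if_neg hm₀', if_neg hm', if_pos ⟨m, rfl⟩]

lemma D_succ_intCast_of_even {n : ℕ} {m : ℤ} (h : Even (m + n)) : D (n + 1) m = D n m := by
  induction n generalizing m with
  | zero =>
    rcases le_or_gt m 0 with hm | hm
    · rw [D_of_nonpos _ (by exact_mod_cast hm), D_of_nonpos _ (by exact_mod_cast hm)]
    · have : 1 < m := by rcases h with ⟨r, hr⟩; push_cast at hr; omega
      rw [D_of_lt _ (by exact_mod_cast this), D_of_lt _ (by exact_mod_cast hm)]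
  | succ n ih =>
    have hpar : Even ((m - 1) + n) ∧ Even ((m + 1) + n) := by
      rcases h with ⟨r, hr⟩; push_cast at hr
      exact ⟨⟨r - 1, by omega⟩, ⟨r, by omega⟩⟩
    rcases le_or_gt m 0 with hm | hm
    · rw [D_of_nonpos _ (by exact_mod_cast hm), D_of_nonpos _ (by exact_mod_cast hm)]
    rcases le_or_gt m (n + 1) with hmn | hmn
    · rw [D_succ_intCast hm (by omega), D_succ_intCast hm hmn, ← Int.cast_one, ← Int.cast_sub, ← Int.cast_add, ih hpar.1, ih hpar.2]
    · have : (n : ℤ) + 1 + 1 < m := by rcases h with ⟨r, hr⟩; push_cast at hr; omega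
      rw [D_of_lt _ (by push_cast; exact_mod_cast this), D_of_lt _ (by push_cast; exact_mod_cast hmn)]

lemma not_exists_intCast_eq_of_mem_Ioo {k : ℤ} {x : ℝ} (hx : x ∈ Ioo (k : ℝ) (k + 1)) :
    ¬ ∃ m : ℤ, x = m := by
  rintro ⟨m, rfl⟩
  obtain ⟨h₁, h₂⟩ := hx
  norm_cast at h₁ h₂
  omega

lemma D_succ_of_mem_Ioo {n k : ℕ} {x : ℝ} (hk : k ≤ n) (hx : x ∈ Ioo (k : ℝ) (k + 1)) :
    D (n + 1) x =
      if Odd n ∧ k = 0 then (1 - x) * D n 0 + x * D n 1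
      else if Even (k + n) then
        1 / (1 + (x - k)) * D n k + (x - k) / (1 + (x - k)) * D n (x + 1)
      else (1 - (x - k)) / (2 - (x - k)) * D n (x - 1) + 1 / (2 - (x - k)) * D n (k + 1) := by
  obtain ⟨h₁, h₂⟩ := hx
  have hk' : (k : ℝ) ≤ n := by exact_mod_cast hk
  have hfloor : ⌊x⌋ = k := by rw [Int.floor_eq_iff]; push_cast; exact ⟨h₁.le, h₂⟩
  have hceil : ⌈x⌉ = k + 1 := by rw [Int.ceil_eq_iff]; push_cast; constructor <;> linarith
  have hsmall : x < 1 ↔ k = 0 := by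
    constructor
    · intro h
      exact Nat.lt_one_iff.1 (by exact_mod_cast h₁.trans h)
    · rintro rfl; simpa using h₂
  have hpar : Even ((k : ℤ) + n) ↔ Even (k + n) := by norm_cast
  rw [D, if_neg (by linarith [(Nat.cast_nonneg k : (0 : ℝ) ≤ k)]), if_neg (by linarith),
    if_neg (not_exists_intCast_eq_of_mem_Ioo (k := k) (by push_cast; exact ⟨h₁, h₂⟩))]
  simp only [hsmall, Int.fract, hfloor, hceil, hpar, Int.cast_natCast, Int.cast_add, Int.cast_one]

lemma D_succ_eqOn_Icc_of_even {n k : ℕ} (hk : k ≤ n) (hkn : Even (k + n)) :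
    EqOn (D (n + 1))
      (fun x => (1 - (x - k) / (1 + (x - k))) * D n k + (x - k) / (1 + (x - k)) * D n (x + 1))
      (Icc k (k + 1)) := by
  rintro x ⟨h₁, h₂⟩
  rcases h₁.eq_or_lt with rfl | h₁
  · have := D_succ_intCast_of_even (n := n) (m := k) (by exact_mod_cast hkn)
    push_cast at this
    simpa using this
  rcases h₂.eq_or_lt with rfl | h₂
  · have := D_succ_intCast (n := n) (m := k + 1) (by omega) (by omega)
    push_cast at this
    rw [this]
    norm_num [add_assoc]
  · have hnot : ¬ (Odd n ∧ k = 0) := by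
      rintro ⟨hn, rfl⟩
      exact Nat.not_even_iff_odd.2 hn (by simpa using hkn)
    have : 0 < 1 + (x - k) := by linarith
    rw [D_succ_of_mem_Ioo hk ⟨h₁, h₂⟩, if_neg hnot, if_pos hkn]
    field_simp
    ring

lemma D_succ_eqOn_Icc_zero_one {n : ℕ} (hn : Odd n) :
    EqOn (D (n + 1)) (fun x => (1 - x) * D n 0 + x * D n 1) (Icc 0 1) := by
  rintro x ⟨h₁, h₂⟩
  rcases h₁.eq_or_lt with rfl | h₁
  · simp [D_of_nonpos]
  rcases h₂.eq_or_lt with rfl | h₂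
  · have := D_succ_intCast_of_even (n := n) (m := 1) (by rw [add_comm]; exact_mod_cast hn.add_one)
    push_cast at this
    simpa using this
  · rw [D_succ_of_mem_Ioo (k := 0) (Nat.zero_le n) ⟨by simpa using h₁, by simpa using h₂⟩,
      if_pos ⟨hn, rfl⟩]

lemma D_succ_eqOn_Icc_of_odd {n k : ℕ} (hk₀ : 1 ≤ k) (hk : k ≤ n) (hkn : Odd (k + n)) :
    EqOn (D (n + 1))
      (fun x => (1 - (1 - (x - k)) / (2 - (x - k))) * D n (k + 1)
        + (1 - (x - k)) / (2 - (x - k)) * D n (x - 1))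
      (Icc k (k + 1)) := by
  rintro x ⟨h₁, h₂⟩
  rcases h₁.eq_or_lt with rfl | h₁
  · have := D_succ_intCast (n := n) (m := k) (by omega) (by omega)
    push_cast at this
    rw [this]
    norm_num
    ring
  rcases h₂.eq_or_lt with rfl | h₂
  · have := D_succ_intCast_of_even (n := n) (m := k + 1)
      (by rw [add_right_comm]; exact_mod_cast hkn.add_one)
    push_cast at this
    simpa using this
  · have hnot : ¬ (Odd n ∧ k = 0) := fun h => by omega
    have : 0 < 2 - (x - k) := by linarith
    rw [D_succ_of_mem_Ioo hk ⟨h₁, h₂⟩, if_neg hnot, if_neg (Nat.not_even_iff_odd.2 hkn)]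
    field_simp
    ring

section Interpolation

variable {α : Type*} [Preorder α] {s : Set α} {w f : α → ℝ} {c : ℝ}

lemma antitoneOn_interpolate_of_le_const (hw : MonotoneOn w s) (hw₀ : ∀ x ∈ s, 0 ≤ w x)
    (hf : AntitoneOn f s) (hfc : ∀ x ∈ s, f x ≤ c) :
    AntitoneOn (fun x => (1 - w x) * c + w x * f x) s := by
  intro x hx y hy hxy
  have := mul_le_mul (hw hx hy hxy) (sub_le_sub_left (hf hx hy hxy) c)
    (sub_nonneg.2 (hfc x hx)) ((hw₀ x hx).trans (hw hx hy hxy))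
  linarith

lemma antitoneOn_interpolate_of_const_le (hw : AntitoneOn w s) (hw₀ : ∀ x ∈ s, 0 ≤ w x)
    (hf : AntitoneOn f s) (hcf : ∀ x ∈ s, c ≤ f x) :
    AntitoneOn (fun x => (1 - w x) * c + w x * f x) s := by
  intro x hx y hy hxy
  have := mul_le_mul (hw hx hy hxy) (sub_le_sub_right (hf hx hy hxy) c)
    (sub_nonneg.2 (hcf y hy)) (hw₀ x hx)
  linarith

end Interpolation

lemma continuousOn_D_Icc {n : ℕ} (hcont : ContinuousOn (D n) (Iic n)) {a b : ℝ}
    (h : b ≤ n ∨ (n : ℝ) < a) : ContinuousOn (D n) (Icc a b) := by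
  rcases h with h | h
  · exact hcont.mono fun x hx => hx.2.trans h
  · exact continuousOn_const.congr fun x hx => D_of_lt n (h.trans_le hx.1)

section Pieces

variable {n k : ℕ} (hanti : Antitone (D n)) (hcont : ContinuousOn (D n) (Iic n))
include hanti hcont

lemma D_succ_continuousOn_antitoneOn_Icc_of_even (hk : k ≤ n) (hkn : Even (k + n)) :
    ContinuousOn (D (n + 1)) (Icc k (k + 1)) ∧ AntitoneOn (D (n + 1)) (Icc k (k + 1)) := by
  have heq := D_succ_eqOn_Icc_of_even hk hkn
  have hpos : ∀ x ∈ Icc (k : ℝ) (k + 1), 0 < 1 + (x - k) := fun x hx => by linarith [hx.1]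
  have hshift : ContinuousOn (fun x : ℝ => D n (x + 1)) (Icc k (k + 1)) := by
    refine (continuousOn_D_Icc hcont (a := k + 1) (b := k + 2) ?_).comp (by fun_prop)
      fun x hx => ⟨by linarith [hx.1], by linarith [hx.2]⟩
    obtain rfl | h : k = n ∨ k + 2 ≤ n := by rcases hkn with ⟨r, hr⟩; omega
    · exact Or.inr (by linarith)
    · exact Or.inl (by exact_mod_cast h)
  refine ⟨ContinuousOn.congr ?_ heq, AntitoneOn.congr ?_ heq.symm⟩
  · fun_prop (disch := exact fun x hx => (hpos x hx).ne')
  · refine antitoneOn_interpolate_of_le_const ?_ (fun x hx => div_nonneg (by linarith [hx.1])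
      (hpos x hx).le) (fun x _ y _ hxy => hanti (by linarith)) fun x hx => hanti (by linarith [hx.1])
    intro x hx y hy hxy
    rw [div_le_div_iff₀ (hpos x hx) (hpos y hy)]
    nlinarith

lemma D_succ_continuousOn_antitoneOn_Icc_of_odd (hk₀ : 1 ≤ k) (hk : k ≤ n) (hkn : Odd (k + n)) :
    ContinuousOn (D (n + 1)) (Icc k (k + 1)) ∧ AntitoneOn (D (n + 1)) (Icc k (k + 1)) := by
  have heq := D_succ_eqOn_Icc_of_odd hk₀ hk hkn
  have hpos : ∀ x ∈ Icc (k : ℝ) (k + 1), 0 < 2 - (x - k) := fun x hx => by linarith [hx.2]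
  have hshift : ContinuousOn (fun x : ℝ => D n (x - 1)) (Icc k (k + 1)) :=
    (continuousOn_D_Icc hcont (a := k - 1) (b := k) (Or.inl (by exact_mod_cast hk))).comp
      (by fun_prop) fun x hx => ⟨by linarith [hx.1], by linarith [hx.2]⟩
  refine ⟨ContinuousOn.congr ?_ heq, AntitoneOn.congr ?_ heq.symm⟩
  · fun_prop (disch := exact fun x hx => (hpos x hx).ne')
  · refine antitoneOn_interpolate_of_const_le ?_ (fun x hx => div_nonneg (by linarith [hx.2])
      (hpos x hx).le) (fun x _ y _ hxy => hanti (by linarith)) fun x hx => hanti (by linarith [hx.2])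
    intro x hx y hy hxy
    rw [div_le_div_iff₀ (hpos y hy) (hpos x hx)]
    nlinarith [hx.2, hy.2]

omit hcont in
lemma D_succ_continuousOn_antitoneOn_Icc_zero_one (hn : Odd n) :
    ContinuousOn (D (n + 1)) (Icc 0 1) ∧ AntitoneOn (D (n + 1)) (Icc 0 1) := by
  have heq := D_succ_eqOn_Icc_zero_one hn
  refine ⟨ContinuousOn.congr (by fun_prop) heq, AntitoneOn.congr ?_ heq.symm⟩
  exact antitoneOn_interpolate_of_le_const (fun _ _ _ _ h => h) (fun _ hx => hx.1)
    antitoneOn_const fun _ _ => hanti zero_le_one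

lemma D_succ_continuousOn_antitoneOn_Icc (hk : k ≤ n) :
    ContinuousOn (D (n + 1)) (Icc k (k + 1)) ∧ AntitoneOn (D (n + 1)) (Icc k (k + 1)) := by
  rcases Nat.even_or_odd (k + n) with hkn | hkn
  · exact D_succ_continuousOn_antitoneOn_Icc_of_even hanti hcont hk hkn
  rcases Nat.eq_zero_or_pos k with rfl | hk₀
  · simpa using D_succ_continuousOn_antitoneOn_Icc_zero_one hanti (by simpa using hkn)
  · exact D_succ_continuousOn_antitoneOn_Icc_of_odd hanti hcont hk₀ hk hkn

end Pieces

lemma continuousOn_antitoneOn_Iic_of_Icc {f : ℝ → ℝ} {m : ℕ}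
    (h₀ : ContinuousOn f (Iic 0) ∧ AntitoneOn f (Iic 0))
    (h : ∀ k < m, ContinuousOn f (Icc k (k + 1)) ∧ AntitoneOn f (Icc k (k + 1))) :
    ContinuousOn f (Iic m) ∧ AntitoneOn f (Iic m) := by
  induction m with
  | zero => simpa using h₀
  | succ m ih =>
    obtain ⟨hc, ha⟩ := ih fun k hk => h k (by omega)
    obtain ⟨hc', ha'⟩ := h m (by omega)
    have hm : (m : ℝ) ≤ m + 1 := by linarith
    push_cast
    rw [← Iic_union_Icc_eq_Iic hm]
    exact ⟨hc.union_of_isClosed hc' isClosed_Iic isClosed_Icc,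
      ha.union_right ha' isGreatest_Iic (isLeast_Icc hm)⟩

lemma D_nonneg_of_antitone {n : ℕ} (h : Antitone (D n)) (x : ℝ) : 0 ≤ D n x :=
  (D_of_lt n (lt_max_of_lt_right (lt_add_one (n : ℝ)))).ge.trans (h (le_max_left x _))

lemma D_antitone_continuousOn_Iic (n : ℕ) : Antitone (D n) ∧ ContinuousOn (D n) (Iic n) := by
  induction n with
  | zero =>
    refine ⟨fun x y hxy => ?_, continuousOn_const.congr fun x hx => D_of_nonpos 0 (by simpa using hx)⟩
    rcases le_or_gt y 0 with hy | hy
    · rw [D_of_nonpos 0 hy, D_of_nonpos 0 (hxy.trans hy)]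
    · rw [D_of_lt 0 (by simpa using hy)]
      unfold D
      split_ifs <;> norm_num
  | succ n ih =>
    obtain ⟨hanti, hcont⟩ := ih
    obtain ⟨hcont', hanti'⟩ := continuousOn_antitoneOn_Iic_of_Icc (f := D (n + 1)) (m := n + 1)
      ⟨continuousOn_const.congr fun x hx => D_of_nonpos _ hx,
        fun x hx y hy _ => by rw [D_of_nonpos _ hx, D_of_nonpos _ hy]⟩
      fun k hk => D_succ_continuousOn_antitoneOn_Icc hanti hcont (by omega)
    have hnonneg : ∀ x ∈ Ici ((n + 1 : ℕ) : ℝ), 0 ≤ D (n + 1) x := by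
      intro x hx
      rcases (mem_Ici.1 hx).eq_or_lt with rfl | hx
      · have := D_succ_intCast (n := n) (m := n + 1) (by omega) le_rfl
        push_cast at this ⊢
        rw [this]
        have := D_nonneg_of_antitone hanti
        exact add_nonneg (mul_nonneg (by norm_num) (this _)) (mul_nonneg (by norm_num) (this _))
      · exact (D_of_lt _ hx).ge
    refine ⟨hanti'.Iic_union_Ici fun x hx y _ hxy => ?_, hcont'⟩
    rcases hxy.eq_or_lt with rfl | hxy
    · rfl
    · rw [D_of_lt _ ((mem_Ici.1 hx).trans_lt hxy)]
      exact hnonneg x hx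

/-- `D n` is nonincreasing, equals `1` on `(-∞, 0]`, equals `0` on
`(n, ∞)`, and is continuous at every point except `n`. -/
theorem D_antitone_boundary_continuous (n : ℕ) :
    (∀ x y : ℝ, x ≤ y → D n y ≤ D n x) ∧
    (∀ x : ℝ, x ≤ 0 → D n x = 1) ∧
    (∀ x : ℝ, (n : ℝ) < x → D n x = 0) ∧
    (∀ x : ℝ, x ≠ (n : ℝ) → ContinuousAt (D n) x) := by
  obtain ⟨hanti, hcont⟩ := D_antitone_continuousOn_Iic n
  refine ⟨fun x y hxy => hanti hxy, fun x => D_of_nonpos n, fun x => D_of_lt n, fun x hx => ?_⟩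
  rcases hx.lt_or_gt with hx | hx
  · exact hcont.continuousAt (Iic_mem_nhds hx)
  · exact continuousAt_const.congr <| (eventually_gt_nhds hx).mono fun y hy => (D_of_lt n hy).symm
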